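/- Let Ω(Z) = f₁∧f₂∧f₃ ∈ Λ³ℂ^6 where f_j = Σ_i z_{ij}e_i + e_{j+3} for a 3×3 complex matrix Z = (z_{ij}), and let Q be the symplectic pairing on Λ³ℂ^6 induced by the wedge product (Q(α,β)·e₁∧⋯∧e₆ = α∧β). For constant vector fields ξ = Σ λ_{ij} ∂/∂z_{ij}, the cubic form satisfies Q(Ω(Z), (ξξξΩ)(Z)) = −6·det(λ_{ij}), where ξξξΩ denotes the third directional derivative of Ω along ξ. -/
import Mathlib


/-- The standard basis vector `e_i` of `ℂ^6`. -/
def eC (i : Fin 6) : Fin 6 → ℂ := Pi.single i 1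

/-- `f_j(Z) = Σ_i z_{ij} e_i + e_{j+3}`. -/
noncomputable def fvec (Z : Matrix (Fin 3) (Fin 3) ℂ) (j : Fin 3) : Fin 6 → ℂ :=
  (∑ i : Fin 3, Z i j • eC (Fin.castLE (by norm_num) i)) + eC (j.addNat 3)

/-- `Ω(Z) = f₁ ∧ f₂ ∧ f₃` as an element of the exterior algebra of `ℂ^6`. -/
noncomputable def OmegaZ (Z : Matrix (Fin 3) (Fin 3) ℂ) : ExteriorAlgebra ℂ (Fin 6 → ℂ) :=
  ExteriorAlgebra.ι ℂ (fvec Z 0) * ExteriorAlgebra.ι ℂ (fvec Z 1) * ExteriorAlgebra.ι ℂ (fvec Z 2)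

/-- The generator `e₁ ∧ ⋯ ∧ e₆`; the symplectic pairing `Q` is characterized by
`α ∧ β = Q(α,β) • EfullC`. -/
noncomputable def EfullC : ExteriorAlgebra ℂ (Fin 6 → ℂ) :=
  (List.ofFn fun i : Fin 6 => ExteriorAlgebra.ι ℂ (eC i)).prod

/- ### Auxiliary machinery -/

/-- Abbreviation for `ι(e_i)`. -/
noncomputable def eι (i : Fin 6) : ExteriorAlgebra ℂ (Fin 6 → ℂ) := ExteriorAlgebra.ι ℂ (eC i)

/-- The direction vector `g_j = Σ_i λ_{ij} e_i`. -/
noncomputable def gvec (lam : Matrix (Fin 3) (Fin 3) ℂ) (j : Fin 3) : Fin 6 → ℂ :=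
  ∑ i : Fin 3, lam i j • eC (Fin.castLE (by norm_num) i)

lemma fvec_explicit (Z : Matrix (Fin 3) (Fin 3) ℂ) (j : Fin 3) :
    ExteriorAlgebra.ι ℂ (fvec Z j) =
      Z 0 j • eι 0 + Z 1 j • eι 1 + Z 2 j • eι 2 + eι (j.addNat 3) := by
  unfold fvec eι
  rw [Fin.sum_univ_three]
  have h0 : Fin.castLE (by norm_num : 3 ≤ 6) (0 : Fin 3) = (0 : Fin 6) := by decide
  have h1 : Fin.castLE (by norm_num : 3 ≤ 6) (1 : Fin 3) = (1 : Fin 6) := by decide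
  have h2 : Fin.castLE (by norm_num : 3 ≤ 6) (2 : Fin 3) = (2 : Fin 6) := by decide
  rw [h0, h1, h2]
  simp [map_add, map_smul]

lemma gvec_explicit (lam : Matrix (Fin 3) (Fin 3) ℂ) (j : Fin 3) :
    ExteriorAlgebra.ι ℂ (gvec lam j) = lam 0 j • eι 0 + lam 1 j • eι 1 + lam 2 j • eι 2 := by
  unfold gvec eι
  rw [Fin.sum_univ_three]
  have h0 : Fin.castLE (by norm_num : 3 ≤ 6) (0 : Fin 3) = (0 : Fin 6) := by decide
  have h1 : Fin.castLE (by norm_num : 3 ≤ 6) (1 : Fin 3) = (1 : Fin 6) := by decide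
  have h2 : Fin.castLE (by norm_num : 3 ≤ 6) (2 : Fin 3) = (2 : Fin 6) := by decide
  rw [h0, h1, h2]
  simp [map_add, map_smul]

lemma eι_sq (i : Fin 6) : eι i * eι i = 0 := ExteriorAlgebra.ι_sq_zero _

lemma eι_sq' (i : Fin 6) (x : ExteriorAlgebra ℂ (Fin 6 → ℂ)) : eι i * (eι i * x) = 0 := by
  rw [← mul_assoc, eι_sq, zero_mul]

lemma eι_comm (i j : Fin 6) (_h : j < i) : eι i * eι j = -(eι j * eι i) :=
  eq_neg_of_add_eq_zero_left (ExteriorAlgebra.ι_add_mul_swap _ _)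

lemma eι_comm' (i j : Fin 6) (h : j < i) (x : ExteriorAlgebra ℂ (Fin 6 → ℂ)) :
    eι i * (eι j * x) = -(eι j * (eι i * x)) := by
  rw [← mul_assoc, eι_comm i j h, neg_mul, mul_assoc]

set_option maxHeartbeats 2000000 in
/-- The core exterior-algebra computation:
`Ω(Z) ∧ g₀ ∧ g₁ ∧ g₂ = (−det λ) • e₁∧⋯∧e₆`. -/
lemma key (Z lam : Matrix (Fin 3) (Fin 3) ℂ) :
    OmegaZ Z *
      (ExteriorAlgebra.ι ℂ (gvec lam 0) * ExteriorAlgebra.ι ℂ (gvec lam 1) *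
        ExteriorAlgebra.ι ℂ (gvec lam 2)) =
      (-(lam.det)) • EfullC := by
  have hE : EfullC = eι 0 * (eι 1 * (eι 2 * (eι 3 * (eι 4 * eι 5)))) := by
    simp only [EfullC, eι, List.ofFn_succ, List.prod_cons, List.prod_nil, mul_one, mul_assoc]
    norm_num [Fin.succ]
    rfl
  unfold OmegaZ
  rw [fvec_explicit, fvec_explicit, fvec_explicit, gvec_explicit, gvec_explicit, gvec_explicit,
    Matrix.det_fin_three, hE]
  have ha0 : (0:Fin 3).addNat 3 = (3:Fin 6) := by decide
  have ha1 : (1:Fin 3).addNat 3 = (4:Fin 6) := by decide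
  have ha2 : (2:Fin 3).addNat 3 = (5:Fin 6) := by decide
  rw [ha0, ha1, ha2]
  simp (disch := decide) only [mul_add, add_mul, smul_mul_assoc, mul_smul_comm, mul_assoc,
    eι_comm, eι_comm', eι_sq, eι_sq', mul_neg, neg_mul, neg_smul, neg_neg, mul_zero, zero_mul,
    smul_zero, add_zero, zero_add, smul_neg, neg_zero, smul_smul, smul_add]
  match_scalars <;> ring

lemma fvec_add (Z lam : Matrix (Fin 3) (Fin 3) ℂ) (s : ℂ) (j : Fin 3) :
    fvec (Z + s • lam) j = fvec Z j + s • gvec lam j := by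
  unfold fvec gvec
  simp only [Matrix.add_apply, Matrix.smul_apply, smul_eq_mul, add_smul, mul_smul,
    Finset.sum_add_distrib, Finset.smul_sum]
  abel

/-- Expansion of `Ω(Z + sλ)` as a cubic polynomial in `s`. -/
lemma omega_expand (Z lam : Matrix (Fin 3) (Fin 3) ℂ) (s : ℂ) :
    OmegaZ (Z + s • lam) = OmegaZ Z
      + s • (ExteriorAlgebra.ι ℂ (gvec lam 0) * ExteriorAlgebra.ι ℂ (fvec Z 1) * ExteriorAlgebra.ι ℂ (fvec Z 2)
          + ExteriorAlgebra.ι ℂ (fvec Z 0) * ExteriorAlgebra.ι ℂ (gvec lam 1) * ExteriorAlgebra.ι ℂ (fvec Z 2)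
          + ExteriorAlgebra.ι ℂ (fvec Z 0) * ExteriorAlgebra.ι ℂ (fvec Z 1) * ExteriorAlgebra.ι ℂ (gvec lam 2))
      + s ^ 2 • (ExteriorAlgebra.ι ℂ (fvec Z 0) * ExteriorAlgebra.ι ℂ (gvec lam 1) * ExteriorAlgebra.ι ℂ (gvec lam 2)
          + ExteriorAlgebra.ι ℂ (gvec lam 0) * ExteriorAlgebra.ι ℂ (fvec Z 1) * ExteriorAlgebra.ι ℂ (gvec lam 2)
          + ExteriorAlgebra.ι ℂ (gvec lam 0) * ExteriorAlgebra.ι ℂ (gvec lam 1) * ExteriorAlgebra.ι ℂ (fvec Z 2))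
      + s ^ 3 • (ExteriorAlgebra.ι ℂ (gvec lam 0) * ExteriorAlgebra.ι ℂ (gvec lam 1) * ExteriorAlgebra.ι ℂ (gvec lam 2)) := by
  unfold OmegaZ
  rw [fvec_add, fvec_add, fvec_add, map_add, map_add, map_add, map_smul, map_smul, map_smul]
  simp only [add_mul, mul_add, smul_mul_assoc, mul_smul_comm, smul_smul, smul_add]
  module

/-- Extract the cubic coefficient from a polynomial identity. -/
lemma cubic_eq {M : Type*} [AddCommGroup M] [Module ℂ M] {a x₁ y₁ z₁ x₂ y₂ z₂ : M}
    (h : ∀ s : ℂ, a + s • x₁ + s ^ 2 • y₁ + s ^ 3 • z₁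
        = a + s • x₂ + s ^ 2 • y₂ + s ^ 3 • z₂) : z₁ = z₂ := by
  linear_combination (norm := module)
    (-(1:ℂ)/2) • h 1 + (-(1:ℂ)/6) • h (-1) + ((1:ℂ)/6) • h 2

/-- for a constant vector field `ξ = Σ λ_{ij} ∂/∂z_{ij}`, the third
directional derivative `ξξξΩ` of the cubic polynomial map `s ↦ Ω(Z + sλ)` (i.e. `6c₃`
where `c₃` is its coefficient of `s³`) satisfies `Q(Ω(Z), ξξξΩ) = −6 det(λ)`, that is,
`Ω(Z) ∧ (ξξξΩ) = (−6 det λ) • e₁∧⋯∧e₆`. -/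
theorem statement19 (Z lam : Matrix (Fin 3) (Fin 3) ℂ)
    (c₁ c₂ c₃ : ExteriorAlgebra ℂ (Fin 6 → ℂ))
    (hpoly : ∀ s : ℂ,
      OmegaZ (Z + s • lam) = OmegaZ Z + s • c₁ + s ^ 2 • c₂ + s ^ 3 • c₃) :
    OmegaZ Z * ((6 : ℂ) • c₃) = (-(6 : ℂ) * lam.det) • EfullC := by
  have hc : c₃ = ExteriorAlgebra.ι ℂ (gvec lam 0) * ExteriorAlgebra.ι ℂ (gvec lam 1) *
      ExteriorAlgebra.ι ℂ (gvec lam 2) :=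
    cubic_eq (fun s => (hpoly s).symm.trans (omega_expand Z lam s))
  rw [hc, mul_smul_comm, key Z lam, smul_smul]
  ring_nf
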